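/- arXiv:0706.1928 — 2 statements merged into one kernel-verified Lean document; each statement's English description precedes it below -/
import Mathlib

section
/- For a probability measure family p(x,dy) on R^d with tail bound ∫_{|y|>n} p(x,dy) ≤ C n^{-α} for all n>0 and some α ∈ (0,2), one has the uniform truncated second-moment bound ∫_{|y|<ε} min(1,|y|^2) p(x, dy/h) h^{-α} ≤ C' ε^{2-α} for all 0<ε<1 and h>0, with a constant C' depending only on C and α. -/
open MeasureTheory Filter Set
open scoped ENNReal Topology

/-!
Rescaling by `h` turns the tail bound `C n^(-α)` into `C h^α n^(-α)`, so it suffices to show that a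
measure `ν` with `ν {r < ‖y‖} ≤ K r^(-α)` has `∫_{‖y‖<ε} ‖y‖² dν ≤ 2K/(2-α) ε^(2-α)`. By the layer
cake formula the left side is `2 ∫₀^ε t ν{t < ‖y‖} dt ≤ 2K ∫₀^ε t^(1-α) dt`, which is finite
exactly because `α < 2`; the factor `h^α` then cancels against `h^(-α)`.
-/

lemma lintegral_Ioc_ofReal_rpow {s a : ℝ} (hs : -1 < s) (ha : 0 ≤ a) :
    ∫⁻ t in Ioc 0 a, ENNReal.ofReal (t ^ s) = ENNReal.ofReal (a ^ (s + 1) / (s + 1)) := by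
  have hint : IntegrableOn (fun t : ℝ => t ^ s) (Ioc 0 a) :=
    (intervalIntegrable_iff_integrableOn_Ioc_of_le ha).mp
      (intervalIntegral.intervalIntegrable_rpow' hs)
  rw [← ofReal_integral_eq_lintegral_ofReal hint, ← intervalIntegral.integral_of_le ha,
    integral_rpow (Or.inl hs), Real.zero_rpow (by linarith), sub_zero]
  filter_upwards [ae_restrict_mem measurableSet_Ioc] with t ht
  exact Real.rpow_nonneg ht.1.le s

section Tail

variable {E : Type*} [NormedAddCommGroup E] [MeasurableSpace E] [BorelSpace E]

lemma restrict_norm_lt_tail_mul_le_indicator {ν : Measure E} {K α ε : ℝ} (hK : 0 ≤ K)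
    (htail : ∀ r : ℝ, 0 < r → ν {y | r < ‖y‖} ≤ ENNReal.ofReal (K * r ^ (-α)))
    {t : ℝ} (ht : 0 < t) :
    ν.restrict {y | ‖y‖ < ε} {y | t < ‖y‖} * ENNReal.ofReal (t ^ ((2 : ℝ) - 1))
      ≤ (Ioc 0 ε).indicator (fun t => ENNReal.ofReal K * ENNReal.ofReal (t ^ (1 - α))) t := by
  by_cases htε : t ≤ ε
  · rw [indicator_of_mem (show t ∈ Ioc 0 ε from ⟨ht, htε⟩)]
    calc ν.restrict {y | ‖y‖ < ε} {y | t < ‖y‖} * ENNReal.ofReal (t ^ ((2 : ℝ) - 1))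
        ≤ ENNReal.ofReal (K * t ^ (-α)) * ENNReal.ofReal (t ^ ((2 : ℝ) - 1)) := by
          gcongr
          exact (Measure.restrict_le_self _).trans (htail t ht)
      _ = ENNReal.ofReal K * ENNReal.ofReal (t ^ (1 - α)) := by
          rw [← ENNReal.ofReal_mul (by positivity), ← ENNReal.ofReal_mul hK, mul_assoc,
            ← Real.rpow_add ht]
          norm_num [sub_eq_neg_add]
  · have hempty : {y : E | t < ‖y‖} ∩ {y | ‖y‖ < ε} = ∅ :=
      eq_empty_iff_forall_notMem.2 fun y hy => htε (hy.1.trans hy.2).le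
    rw [Measure.restrict_apply' (measurableSet_lt continuous_norm.measurable measurable_const),
      hempty, measure_empty, zero_mul]
    exact zero_le

lemma setLIntegral_norm_lt_sq_le_of_tail_le {ν : Measure E} {K α ε : ℝ} (hK : 0 ≤ K)
    (hα : α < 2) (hε : 0 ≤ ε)
    (htail : ∀ r : ℝ, 0 < r → ν {y | r < ‖y‖} ≤ ENNReal.ofReal (K * r ^ (-α))) :
    ∫⁻ y in {y | ‖y‖ < ε}, ENNReal.ofReal (‖y‖ ^ 2) ∂ν
      ≤ ENNReal.ofReal (2 * K / (2 - α) * ε ^ (2 - α)) := by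
  have hlayer := lintegral_rpow_eq_lintegral_meas_lt_mul (ν.restrict {y | ‖y‖ < ε})
    (f := fun y => ‖y‖) (ae_of_all _ norm_nonneg) continuous_norm.aemeasurable two_pos
  simp only [Real.rpow_two] at hlayer
  rw [hlayer]
  calc ENNReal.ofReal 2 * ∫⁻ t in Ioi 0,
        ν.restrict {y | ‖y‖ < ε} {y | t < ‖y‖} * ENNReal.ofReal (t ^ ((2 : ℝ) - 1))
      ≤ ENNReal.ofReal 2 * ∫⁻ t in Ioi 0,
          (Ioc 0 ε).indicator (fun t => ENNReal.ofReal K * ENNReal.ofReal (t ^ (1 - α))) t := by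
        have hmeas : Measurable fun t : ℝ => ENNReal.ofReal K * ENNReal.ofReal (t ^ (1 - α)) := by
          fun_prop
        exact mul_le_mul_right (setLIntegral_mono (hmeas.indicator measurableSet_Ioc)
          fun t ht => restrict_norm_lt_tail_mul_le_indicator hK htail ht) _
    _ = ENNReal.ofReal 2 * (ENNReal.ofReal K * ENNReal.ofReal (ε ^ (2 - α) / (2 - α))) := by
        rw [lintegral_indicator measurableSet_Ioc, Measure.restrict_restrict measurableSet_Ioc,
          inter_eq_self_of_subset_left Ioc_subset_Ioi_self, lintegral_const_mul' _ _ (by simp),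
          lintegral_Ioc_ofReal_rpow (by linarith) hε, show 1 - α + 1 = 2 - α by ring]
    _ = ENNReal.ofReal (2 * K / (2 - α) * ε ^ (2 - α)) := by
        rw [← ENNReal.ofReal_mul hK, ← ENNReal.ofReal_mul zero_le_two]
        congr 1
        ring

end Tail

lemma map_smul_apply_setOf_lt_norm {E : Type*} [NormedAddCommGroup E] [NormedSpace ℝ E]
    [MeasurableSpace E] [BorelSpace E] (ν : Measure E) {h : ℝ} (hh : 0 < h) (r : ℝ) :
    ν.map (fun z => h • z) {y | r < ‖y‖} = ν {z | r / h < ‖z‖} := by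
  rw [Measure.map_apply (continuous_const_smul h).measurable
    (measurableSet_lt measurable_const continuous_norm.measurable)]
  congr 1
  ext z
  simp [norm_smul, abs_of_pos hh, div_lt_iff₀ hh, mul_comm]

theorem stmt0_general (d : ℕ) (α : ℝ) (hα : 0 < α ∧ α < 2) (C : ℝ) (hC : 0 < C)
    (p : EuclideanSpace ℝ (Fin d) → Measure (EuclideanSpace ℝ (Fin d)))
    (htail : ∀ x, ∀ n : ℝ, 0 < n → p x {y | n < ‖y‖} ≤ ENNReal.ofReal (C * n ^ (-α))) :
    ∃ C' : ℝ, 0 < C' ∧ ∀ x, ∀ ε h : ℝ, 0 < ε → ε < 1 → 0 < h →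
      (∫⁻ y in {y | ‖y‖ < ε}, ENNReal.ofReal (min 1 (‖y‖ ^ 2))
          ∂(Measure.map (fun z => h • z) (p x))) * ENNReal.ofReal (h ^ (-α))
        ≤ ENNReal.ofReal (C' * ε ^ (2 - α)) := by
  have h2α : 0 < 2 - α := by linarith [hα.2]
  refine ⟨2 * C / (2 - α), by positivity, fun x ε h hε _ hh => ?_⟩
  have htail_map : ∀ r : ℝ, 0 < r →
      Measure.map (fun z => h • z) (p x) {y | r < ‖y‖} ≤ ENNReal.ofReal (C * h ^ α * r ^ (-α)) := by
    intro r hr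
    rw [map_smul_apply_setOf_lt_norm _ hh]
    convert htail x _ (div_pos hr hh) using 2
    rw [Real.div_rpow hr.le hh.le, Real.rpow_neg hh.le α, div_inv_eq_mul]
    ring
  calc (∫⁻ y in {y | ‖y‖ < ε}, ENNReal.ofReal (min 1 (‖y‖ ^ 2))
          ∂(Measure.map (fun z => h • z) (p x))) * ENNReal.ofReal (h ^ (-α))
      ≤ (∫⁻ y in {y | ‖y‖ < ε}, ENNReal.ofReal (‖y‖ ^ 2)
          ∂(Measure.map (fun z => h • z) (p x))) * ENNReal.ofReal (h ^ (-α)) := by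
        gcongr with y
        exact min_le_right _ _
    _ ≤ ENNReal.ofReal (2 * (C * h ^ α) / (2 - α) * ε ^ (2 - α)) * ENNReal.ofReal (h ^ (-α)) := by
        gcongr
        exact setLIntegral_norm_lt_sq_le_of_tail_le (by positivity) hα.2 hε.le htail_map
    _ = ENNReal.ofReal (2 * C / (2 - α) * ε ^ (2 - α)) := by
        rw [← ENNReal.ofReal_mul (by positivity), Real.rpow_neg hh.le]
        congr 1
        field_simp

/-- Uniform truncated second-moment bound for a family of probability measures with
uniform stable-like tails. -/
theorem stmt0 (d : ℕ) (α : ℝ) (hα : 0 < α ∧ α < 2) (C : ℝ) (hC : 0 < C)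
    (p : EuclideanSpace ℝ (Fin d) → Measure (EuclideanSpace ℝ (Fin d)))
    (hp : ∀ x, IsProbabilityMeasure (p x))
    (htail : ∀ x, ∀ n : ℝ, 0 < n → p x {y | n < ‖y‖} ≤ ENNReal.ofReal (C * n ^ (-α))) :
    ∃ C' : ℝ, 0 < C' ∧ ∀ x, ∀ ε h : ℝ, 0 < ε → ε < 1 → 0 < h →
      (∫⁻ y in {y | ‖y‖ < ε}, ENNReal.ofReal (min 1 (‖y‖ ^ 2))
          ∂(Measure.map (fun z => h • z) (p x))) * ENNReal.ofReal (h ^ (-α))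
        ≤ ENNReal.ofReal (C' * ε ^ (2 - α)) :=
  stmt0_general d α hα C hC p htail
end

section
/- Let p be a probability measure on R^d with p({0})=0 such that for every open Ω ⊆ S^{d-1} with boundary of measure zero, ∫_{|y|>n, ȳ∈Ω} p(dy) ~ (1/(α n^α)) ∫_Ω S(s) dس as n→∞, where ȳ = y/|y|, α∈(0,2), and S is a continuous nonnegative function on the sphere. Then for any 0<A<B and such Ω, ∫_{A<|z|<B, z̄∈Ω} p(dz/h) h^{-α} → ∫_A^B |z|^{-(α+1)} d|z| · ∫_Ω S(s) ds as h→0. -/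
open MeasureTheory Filter Set
open scoped ENNReal Topology

/-!
Push `p`, restricted to the cone `{y | ‖y‖⁻¹ • y ∈ U}`, forward by the norm: this gives a
finite measure `ν` on `ℝ` with `ν (n, ∞) ~ c n ^ (-α)`, where `c = α⁻¹ ∫_U S dσ`. Scaling by
`h` maps the annular cone onto the cone over `U` with radii in `(A / h, B / h)`, so the claim
becomes `ν (A / h, B / h) h ^ (-α) → c (A ^ (-α) - B ^ (-α))`. This follows from the tail
asymptotics at `A / h` and `B / h` once the closed tail `ν [n, ∞)` is squeezed between
`ν (n, ∞)` and `ν (n - 1, ∞)`.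
-/

theorem tendsto_comp_div_mul_rpow_neg {f : ℝ → ℝ} {α L C : ℝ} (hC : 0 < C)
    (hf : Tendsto (fun n => f n * n ^ α) atTop (𝓝 L)) :
    Tendsto (fun h => f (C / h) * h ^ (-α)) (𝓝[>] 0) (𝓝 (L * C ^ (-α))) := by
  have hCh : Tendsto (fun h : ℝ => C / h) (𝓝[>] 0) atTop :=
    tendsto_inv_nhdsGT_zero.const_mul_atTop hC
  refine ((hf.comp hCh).mul_const (C ^ (-α))).congr' ?_
  filter_upwards [self_mem_nhdsWithin] with h (hh : 0 < h)
  rw [Function.comp_apply, mul_assoc, Real.div_rpow hC.le hh.le, Real.rpow_neg hC.le,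
    Real.rpow_neg hh.le]
  field_simp

theorem tendsto_measureReal_Ici_mul_rpow {ν : Measure ℝ} [IsFiniteMeasure ν] {α L : ℝ}
    (hν : Tendsto (fun n => ν.real (Ioi n) * n ^ α) atTop (𝓝 L)) :
    Tendsto (fun n => ν.real (Ici n) * n ^ α) atTop (𝓝 L) := by
  have hratio : Tendsto (fun n : ℝ => (n / (n - 1)) ^ α) atTop (𝓝 1) := by
    have h : Tendsto (fun n : ℝ => (1 - n⁻¹)⁻¹) atTop (𝓝 1) := by
      simpa using ((tendsto_inv_atTop_zero (𝕜 := ℝ)).const_sub (1 : ℝ)).inv₀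
        (by norm_num : (1 : ℝ) - 0 ≠ 0)
    have h' : Tendsto (fun n : ℝ => n / (n - 1)) atTop (𝓝 1) := by
      refine h.congr' ?_
      filter_upwards [eventually_gt_atTop 1] with n hn
      have : n - 1 ≠ 0 := by linarith
      field_simp
    simpa using h'.rpow_const (p := α) (Or.inl one_ne_zero)
  have hupper : Tendsto (fun n => ν.real (Ioi (n - 1)) * n ^ α) atTop (𝓝 L) := by
    have hshift := hν.comp (tendsto_atTop_add_const_right _ (-1) tendsto_id)
    rw [← mul_one L]
    refine (hshift.mul hratio).congr' ?_
    filter_upwards [eventually_gt_atTop 1] with n hn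
    simp only [Function.comp_apply, id, ← sub_eq_add_neg, mul_assoc]
    rw [← Real.mul_rpow (by linarith) (by positivity), mul_div_cancel₀ _ (by linarith)]
  refine tendsto_of_tendsto_of_tendsto_of_le_of_le' hν hupper ?_ ?_
  all_goals filter_upwards [eventually_gt_atTop 0] with n hn
  all_goals refine mul_le_mul_of_nonneg_right (measureReal_mono fun x hx => ?_) (by positivity)
  · exact mem_Ici.2 (le_of_lt hx)
  · exact mem_Ioi.2 (by linarith [mem_Ici.1 hx])

theorem tendsto_measureReal_Ioo_div_mul_rpow {ν : Measure ℝ} [IsFiniteMeasure ν] {α L A B : ℝ}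
    (hA : 0 < A) (hAB : A < B) (hν : Tendsto (fun n => ν.real (Ioi n) * n ^ α) atTop (𝓝 L)) :
    Tendsto (fun h => ν.real (Ioo (A / h) (B / h)) * h ^ (-α)) (𝓝[>] 0)
      (𝓝 (L * (A ^ (-α) - B ^ (-α)))) := by
  rw [mul_sub]
  have hB := tendsto_comp_div_mul_rpow_neg (hA.trans hAB) (tendsto_measureReal_Ici_mul_rpow hν)
  refine ((tendsto_comp_div_mul_rpow_neg hA hν).sub hB).congr' ?_
  filter_upwards [self_mem_nhdsWithin] with h (hh : 0 < h)
  have hsub : Ici (B / h) ⊆ Ioi (A / h) :=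
    Ici_subset_Ioi.2 (div_lt_div_of_pos_right hAB hh)
  rw [← Ioi_sdiff_Ici, measureReal_sdiff hsub measurableSet_Ici, sub_mul]

theorem integral_rpow_neg_succ {α A B : ℝ} (hα : α ≠ 0) (hA : 0 < A) (hAB : A ≤ B) :
    ∫ r in A..B, r ^ (-(α + 1)) = (A ^ (-α) - B ^ (-α)) / α := by
  have h0 : (0 : ℝ) ∉ uIcc A B := by
    rw [uIcc_of_le hAB]; exact fun h => (not_le.2 hA) h.1
  rw [integral_rpow (Or.inr ⟨by contrapose! hα; linarith, h0⟩),
    show -(α + 1) + 1 = -α by ring, div_neg, ← neg_div, neg_sub]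

theorem inv_norm_smul_smul_of_pos {E : Type*} [NormedAddCommGroup E] [NormedSpace ℝ E] {c : ℝ}
    (hc : 0 < c) (y : E) :
    ‖c • y‖⁻¹ • c • y = ‖y‖⁻¹ • y := by
  rw [norm_smul, Real.norm_of_nonneg hc.le, smul_smul, mul_inv_rev, mul_assoc,
    inv_mul_cancel₀ hc.ne', mul_one]

section Cone

variable {E : Type*} [NormedAddCommGroup E] [NormedSpace ℝ E] [MeasurableSpace E] [BorelSpace E]

noncomputable def radialMeasureOnCone (p : Measure E) (U : Set E) : Measure ℝ :=
  (p.restrict {y | ‖y‖⁻¹ • y ∈ U}).map (‖·‖)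

instance isFiniteMeasure_radialMeasureOnCone (p : Measure E) [IsFiniteMeasure p] (U : Set E) :
    IsFiniteMeasure (radialMeasureOnCone p U) := by
  unfold radialMeasureOnCone; infer_instance

theorem radialMeasureOnCone_apply (p : Measure E) (U : Set E) {s : Set ℝ}
    (hs : MeasurableSet s) :
    radialMeasureOnCone p U s = p {y | ‖y‖ ∈ s ∧ ‖y‖⁻¹ • y ∈ U} := by
  rw [radialMeasureOnCone, Measure.map_apply measurable_norm hs,
    Measure.restrict_apply (measurable_norm hs)]
  rfl

theorem map_smul_annularCone {p : Measure E} {c : ℝ} (hc : 0 < c) (A B : ℝ) (U : Set E) :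
    p.map (c • ·) {z | A < ‖z‖ ∧ ‖z‖ < B ∧ ‖z‖⁻¹ • z ∈ U} =
      radialMeasureOnCone p U (Ioo (A / c) (B / c)) := by
  rw [radialMeasureOnCone_apply p U measurableSet_Ioo,
    (measurableEmbedding_const_smul₀ hc.ne').map_apply]
  congr 1
  ext y
  simp only [mem_preimage, mem_ofPred_eq, inv_norm_smul_smul_of_pos hc]
  simp only [mem_Ioo, norm_smul, Real.norm_of_nonneg hc.le, div_lt_iff₀ hc, lt_div_iff₀ hc,
    mul_comm c, and_assoc]

end Cone

theorem stmt1_general (d : ℕ) (α : ℝ) (hα : 0 < α ∧ α < 2)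
    (p : Measure (EuclideanSpace ℝ (Fin d))) [IsProbabilityMeasure p]
    (σ : Measure (EuclideanSpace ℝ (Fin d)))
    (S : EuclideanSpace ℝ (Fin d) → ℝ)
    (hattr : ∀ U : Set (EuclideanSpace ℝ (Fin d)), IsOpen U → σ (frontier U) = 0 →
      Tendsto (fun n : ℝ => (p {y | n < ‖y‖ ∧ ‖y‖⁻¹ • y ∈ U}).toReal * (α * n ^ α))
        atTop (𝓝 (∫ s in U, S s ∂σ))) :
    ∀ U : Set (EuclideanSpace ℝ (Fin d)), IsOpen U → σ (frontier U) = 0 →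
      ∀ A B : ℝ, 0 < A → A < B →
        Tendsto (fun h : ℝ =>
            ((Measure.map (fun z => h • z) p)
              {z | A < ‖z‖ ∧ ‖z‖ < B ∧ ‖z‖⁻¹ • z ∈ U}).toReal * h ^ (-α))
          (𝓝[>] 0)
          (𝓝 ((∫ r in A..B, r ^ (-(α + 1))) * ∫ s in U, S s ∂σ)) := by
  intro U hU hUσ A B hA hAB
  set ν := radialMeasureOnCone p U
  have hν :
      Tendsto (fun n => ν.real (Ioi n) * n ^ α) atTop (𝓝 ((∫ s in U, S s ∂σ) / α)) := by
    refine ((hattr U hU hUσ).div_const α).congr fun n => ?_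
    rw [measureReal_def, radialMeasureOnCone_apply p U measurableSet_Ioi, mul_left_comm,
      mul_div_cancel_left₀ _ hα.1.ne']
    rfl
  rw [integral_rpow_neg_succ hα.1.ne' hA hAB.le, div_mul_comm]
  refine (tendsto_measureReal_Ioo_div_mul_rpow hA hAB hν).congr' ?_
  filter_upwards [self_mem_nhdsWithin] with h (hh : 0 < h)
  rw [map_smul_annularCone hh, measureReal_def]

/-- Convergence of rescaled measures on annular cone sets, for a probability measure in the
normal domain of attraction of a symmetric `α`-stable law with spectral density `S` with
respect to the surface measure `σ` on the unit sphere. -/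
theorem stmt1 (d : ℕ) (α : ℝ) (hα : 0 < α ∧ α < 2)
    (p : Measure (EuclideanSpace ℝ (Fin d))) [IsProbabilityMeasure p]
    (hp0 : p {0} = 0)
    (σ : Measure (EuclideanSpace ℝ (Fin d))) [IsFiniteMeasure σ]
    (hσsphere : ∀ s : Set (EuclideanSpace ℝ (Fin d)), σ s = σ (s ∩ Metric.sphere 0 1))
    (S : EuclideanSpace ℝ (Fin d) → ℝ) (hScont : Continuous S) (hSnonneg : ∀ s, 0 ≤ S s)
    (hattr : ∀ U : Set (EuclideanSpace ℝ (Fin d)), IsOpen U → σ (frontier U) = 0 →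
      Tendsto (fun n : ℝ => (p {y | n < ‖y‖ ∧ ‖y‖⁻¹ • y ∈ U}).toReal * (α * n ^ α))
        atTop (𝓝 (∫ s in U, S s ∂σ))) :
    ∀ U : Set (EuclideanSpace ℝ (Fin d)), IsOpen U → σ (frontier U) = 0 →
      ∀ A B : ℝ, 0 < A → A < B →
        Tendsto (fun h : ℝ =>
            ((Measure.map (fun z => h • z) p)
              {z | A < ‖z‖ ∧ ‖z‖ < B ∧ ‖z‖⁻¹ • z ∈ U}).toReal * h ^ (-α))
          (𝓝[>] 0)
          (𝓝 ((∫ r in A..B, r ^ (-(α + 1))) * ∫ s in U, S s ∂σ)) :=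
  stmt1_general d α hα p σ S hattr
end
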